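/- (Nonsmooth DCA convergence rate, case μ2 < 0.) Let f1 ∈ F_{μ1,∞} and f2 ∈ F_{μ2,∞} with μ1 > −μ2 > 0. Let F := f1 − f2 be bounded below with F* := inf F finite. Let N ≥ 1 and let x⁰, …, x^N be a DCA sequence with subgradients, and for 0 ≤ k ≤ N−1 set T(x^k) := f1(x^k) − f1(x^{k+1}) − ⟨g2^k, x^k − x^{k+1}⟩. Then min_{0 ≤ k ≤ N−1} T(x^k) ≤ (μ1/(μ1 + μ2))·(F(x⁰) − F*)/N. -/
import Mathlib


open RealInnerProductSpace

variable {H : Type*} [NormedAddCommGroup H] [InnerProductSpace ℝ H]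

/-- `f` has lower curvature `μ`, i.e. `f - (μ/2)‖·‖²` is convex. -/
def HasLowerCurvature (μ : ℝ) (f : H → ℝ) : Prop :=
  ConvexOn ℝ Set.univ fun x => f x - μ / 2 * ‖x‖ ^ 2

/-- `f` has upper curvature `L`, i.e. `(L/2)‖·‖² - f` is convex. -/
def HasUpperCurvature (L : ℝ) (f : H → ℝ) : Prop :=
  ConvexOn ℝ Set.univ fun x => L / 2 * ‖x‖ ^ 2 - f x

/-- `g` is a subgradient of `f` (of lower curvature `μ`) at `x`. -/
def IsSubgradient (μ : ℝ) (f : H → ℝ) (x g : H) : Prop :=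
  ∀ y, f y ≥ f x + ⟪g, y - x⟫ + μ / 2 * ‖y - x‖ ^ 2



private lemma dca_step_arith (mu1 mu2 t s d : ℝ) (hmu1 : 0 < mu1) (h2 : 0 < -mu2)
    (hA : mu1 / 2 * s ≤ t) (hB : t + mu2 / 2 * s ≤ d) : t * (mu1 + mu2) ≤ mu1 * d := by
  nlinarith [mul_nonneg h2.le (sub_nonneg.mpr hA), mul_le_mul_of_nonneg_left hB hmu1.le]

/-- nonsmooth DCA convergence rate, case `μ₂ < 0`. -/
theorem dca_nonsmooth_rate_mu2_neg
    (mu1 mu2 : ℝ) (h1 : -mu2 < mu1) (h2 : 0 < -mu2)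
    (f1 f2 : H → ℝ)
    (h1lo : HasLowerCurvature mu1 f1) (h2lo : HasLowerCurvature mu2 f2)
    (hbdd : BddBelow (Set.range fun z : H => f1 z - f2 z))
    (N : ℕ) (hN : 1 ≤ N) (x g1 g2 : ℕ → H)
    (hg1 : ∀ k ≤ N, IsSubgradient mu1 f1 (x k) (g1 k))
    (hg2 : ∀ k ≤ N, IsSubgradient mu2 f2 (x k) (g2 k))
    (hdca : ∀ k < N, g1 (k + 1) = g2 k) :
    ((Finset.range N).inf' (Finset.nonempty_range_iff.mpr (by omega))
        fun k => f1 (x k) - f1 (x (k + 1)) - ⟪g2 k, x k - x (k + 1)⟫) ≤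
      mu1 / (mu1 + mu2) * (((f1 (x 0) - f2 (x 0)) - ⨅ z : H, (f1 z - f2 z)) / N) := by
  set T : ℕ → ℝ := fun k => f1 (x k) - f1 (x (k + 1)) - ⟪g2 k, x k - x (k + 1)⟫ with hT
  set F : ℕ → ℝ := fun k => f1 (x k) - f2 (x k) with hF
  have hmu1 : 0 < mu1 := lt_trans h2 h1
  have hsumpos : 0 < mu1 + mu2 := by linarith
  have hc : 0 ≤ mu1 / (mu1 + mu2) := div_nonneg hmu1.le hsumpos.le
  have hNpos : (0 : ℝ) < N := by exact_mod_cast hN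
  -- per-step inequality
  have hstep : ∀ k < N, T k ≤ mu1 / (mu1 + mu2) * (F k - F (k + 1)) := by
    intro k hk
    have hA := hg1 (k + 1) (by omega) (x k)
    rw [hdca k hk] at hA
    have hB := hg2 k hk.le (x (k + 1))
    have hnorm : ‖x (k + 1) - x k‖ = ‖x k - x (k + 1)‖ := norm_sub_rev _ _
    have hip : ⟪g2 k, x (k + 1) - x k⟫ = -⟪g2 k, x k - x (k + 1)⟫ := by
      rw [← inner_neg_right]; congr 1; abel
    rw [hnorm, hip] at hB
    set s : ℝ := ‖x k - x (k + 1)‖ ^ 2 with hs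
    have hs0 : 0 ≤ s := by positivity
    have hA' : mu1 / 2 * s ≤ T k := by simp only [hT]; linarith
    have hB' : T k + mu2 / 2 * s ≤ F k - F (k + 1) := by
      simp only [hT, hF]; linarith
    rw [div_mul_eq_mul_div, le_div_iff₀ hsumpos]
    exact dca_step_arith mu1 mu2 (T k) s (F k - F (k + 1)) hmu1 h2 hA' hB'
  -- min ≤ average
  have hne : (Finset.range N).Nonempty := Finset.nonempty_range_iff.mpr (by omega)
  have hmin : (N : ℝ) * (Finset.range N).inf' hne T ≤ ∑ k ∈ Finset.range N, T k := by
    have := Finset.card_nsmul_le_sum (Finset.range N) T ((Finset.range N).inf' hne T)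
      (fun i hi => Finset.inf'_le _ hi)
    simpa [Finset.card_range, nsmul_eq_mul] using this
  -- telescoping bound
  have hsum : ∑ k ∈ Finset.range N, T k ≤ mu1 / (mu1 + mu2) * (F 0 - F N) := by
    calc ∑ k ∈ Finset.range N, T k
        ≤ ∑ k ∈ Finset.range N, mu1 / (mu1 + mu2) * (F k - F (k + 1)) :=
          Finset.sum_le_sum fun k hk => hstep k (Finset.mem_range.mp hk)
      _ = mu1 / (mu1 + mu2) * ∑ k ∈ Finset.range N, (F k - F (k + 1)) := by
          rw [Finset.mul_sum]
      _ = mu1 / (mu1 + mu2) * (F 0 - F N) := by rw [Finset.sum_range_sub' F]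
  -- infimum bound
  have hFstar : (⨅ z : H, (f1 z - f2 z)) ≤ F N := ciInf_le hbdd (x N)
  have hsum' : ∑ k ∈ Finset.range N, T k ≤
      mu1 / (mu1 + mu2) * (F 0 - ⨅ z : H, (f1 z - f2 z)) := by
    refine hsum.trans (mul_le_mul_of_nonneg_left (by linarith) hc)
  rw [mul_div_assoc', le_div_iff₀ hNpos, mul_comm]
  exact le_trans hmin (le_trans hsum' (by simp [hF]))
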